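/- Let n ≥ 3 be an integer and let m be a positive integer coprime to b. If V_n divides m, then 2n divides τ(m). -/
import Mathlib


/-- The first Lucas sequence with parameters `(a, b)`:
`U 0 = 0`, `U 1 = 1`, `U (k+2) = a * U (k+1) + b * U k`. -/
def U (a b : ℤ) : ℕ → ℤ
  | 0 => 0
  | 1 => 1
  | (k + 2) => a * U a b (k + 1) + b * U a b k

/-- The second Lucas sequence with parameters `(a, b)`:
`V 0 = 2`, `V 1 = a`, `V (k+2) = a * V (k+1) + b * V k`. -/
def V (a b : ℤ) : ℕ → ℤ
  | 0 => 2
  | 1 => a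
  | (k + 2) => a * V a b (k + 1) + b * V a b k

/-- The order of appearance of `m` in the first Lucas sequence with parameters `(a, b)`:
the smallest positive integer `k` such that `m ∣ U a b k`. -/
noncomputable def tau (a b : ℤ) (m : ℤ) : ℕ :=
  sInf {k : ℕ | 0 < k ∧ m ∣ U a b k}

/-- The pair `(a, b)` is nondegenerate: `b ≠ 0` and
`(a, b) ∉ {(±2, -1), (±1, -1), (0, ±1), (±1, 0)}`. -/
def Nondegenerate (a b : ℤ) : Prop :=
  b ≠ 0 ∧ (a, b) ∉ ({(2, -1), (-2, -1), (1, -1), (-1, -1),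
    (0, 1), (0, -1), (1, 0), (-1, 0)} : Set (ℤ × ℤ))

lemma U_rec (a b : ℤ) (k : ℕ) : U a b (k+2) = a * U a b (k+1) + b * U a b k := rfl
lemma V_rec (a b : ℤ) (k : ℕ) : V a b (k+2) = a * V a b (k+1) + b * V a b k := rfl

lemma U_add (a b : ℤ) : ∀ p q, U a b (p+q+1) = U a b (p+1) * U a b (q+1) + b * (U a b p * U a b q) := by
  intro p
  induction p using Nat.twoStepInduction with
  | zero => intro q; simp [U]
  | one =>
    intro q
    rw [show (1+q+1 : ℕ) = q+2 by omega, U_rec]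
    show _ = U a b 2 * _ + _
    rw [U_rec a b 0]
    simp [U]
  | more p ih1 ih2 =>
    intro q
    rw [show (p+2+q+1 : ℕ) = (p+q+1)+2 by omega, U_rec,
      show (p+q+1+1 : ℕ) = (p+1)+q+1 by omega, ih2 q, ih1 q,
      show (p+2+1 : ℕ) = (p+1)+2 by omega, U_rec a b (p+1), U_rec a b p]
    ring

lemma V_eq_U (a b : ℤ) : ∀ n, V a b (n+1) = U a b (n+2) + b * U a b n := by
  intro n
  induction n using Nat.twoStepInduction with
  | zero => simp [U, V]
  | one => rw [V_rec, U_rec a b 1]; simp [U, V]; ring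
  | more n ih1 ih2 =>
    rw [show (n+2+1 : ℕ) = (n+1)+2 by omega, V_rec,
      show (n+2+2 : ℕ) = (n+2)+2 by omega, U_rec a b (n+2), ih2, ih1,
      U_rec a b (n+1), U_rec a b n]
    ring

lemma U_two_mul (a b : ℤ) (n : ℕ) : U a b (2*(n+1)) = U a b (n+1) * V a b (n+1) := by
  have h := U_add a b (n+1) n
  rw [show (2*(n+1) : ℕ) = (n+1)+n+1 by omega, h, V_eq_U]
  ring

lemma U_coprime_b (a b : ℤ) (hab : IsCoprime a b) : ∀ k, IsCoprime (U a b (k+1)) b := by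
  intro k
  induction k using Nat.twoStepInduction with
  | zero => simp [U, isCoprime_one_left]
  | one => simpa [U] using hab
  | more k ih1 ih2 =>
    rw [show (k+2+1 : ℕ) = (k+1)+2 by omega, U_rec]
    have h2 : IsCoprime (a * U a b (k+1+1)) b := hab.mul_left ih2
    have h3 := h2.add_mul_right_left (U a b (k+1))
    rwa [mul_comm (U a b (k+1)) b] at h3

lemma U_coprime_succ (a b : ℤ) (hab : IsCoprime a b) : ∀ k, IsCoprime (U a b k) (U a b (k+1)) := by
  intro k
  induction k using Nat.twoStepInduction with
  | zero => simp [U, isCoprime_one_right]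
  | one => simp [U, isCoprime_one_left]
  | more k ih1 ih2 =>
    have hb : IsCoprime (U a b (k+1+1)) (b * U a b (k+1)) :=
      (U_coprime_b a b hab (k+1)).mul_right ih2.symm
    have h2 := hb.add_mul_right_right a
    have h3 : IsCoprime (U a b (k+1+1)) (a * U a b (k+1+1) + b * U a b (k+1)) := by
      rwa [add_comm (b * U a b (k+1))] at h2
    exact h3

lemma dvd_U_sub (a b : ℤ) (hab : IsCoprime a b) (m : ℤ) (p q : ℕ)
    (hp : m ∣ U a b p) (hpq : m ∣ U a b (p+q)) : m ∣ U a b q := by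
  cases q with
  | zero => simp [U]
  | succ q =>
    have h := U_add a b p q
    rw [show (p + (q+1) : ℕ) = p+q+1 by omega] at hpq
    have h1 : m ∣ U a b (p+1) * U a b (q+1) := by
      have : U a b (p+1) * U a b (q+1) = U a b (p+q+1) - b * (U a b p * U a b q) := by
        rw [h]; ring
      rw [this]
      exact dvd_sub hpq (Dvd.dvd.mul_left (hp.mul_right _) b)
    have hcop : IsCoprime m (U a b (p+1)) :=
      IsCoprime.of_isCoprime_of_dvd_left (U_coprime_succ a b hab p) hp
    exact hcop.dvd_of_dvd_mul_left h1

lemma tau_dvd (a b : ℤ) (hab : IsCoprime a b) (m : ℤ) :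
    ∀ k, m ∣ U a b k → tau a b m ∣ k := by
  intro k
  induction k using Nat.strong_induction_on with
  | _ k ih =>
    intro hk
    rcases Nat.eq_zero_or_pos k with h0 | hpos
    · simp [h0]
    · have hkS : k ∈ {k : ℕ | 0 < k ∧ m ∣ U a b k} := ⟨hpos, hk⟩
      have hne : {k : ℕ | 0 < k ∧ m ∣ U a b k}.Nonempty := ⟨k, hkS⟩
      have htS : tau a b m ∈ {k : ℕ | 0 < k ∧ m ∣ U a b k} := Nat.sInf_mem hne
      have htk : tau a b m ≤ k := Nat.sInf_le hkS
      obtain ⟨htpos, htdvd⟩ := htS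
      have hsub : m ∣ U a b (k - tau a b m) := by
        apply dvd_U_sub a b hab m (tau a b m) _ htdvd
        rwa [Nat.add_sub_cancel' htk]
      have hdk : tau a b m ∣ k - tau a b m := ih _ (by omega) hsub
      have : k = tau a b m + (k - tau a b m) := by omega
      rw [this]
      exact Nat.dvd_add dvd_rfl hdk

section Growth
variable (a b : ℤ)

/-- invariant machine for the `b < 0` case -/
lemma lucasInv_neg (ha : 3 ≤ a) (hb : b ≤ -1) (hD : 4*(-b) ≤ a^2 - 1)
    (X : ℕ → ℤ) (hrec : ∀ k, X (k+2) = a * X (k+1) + b * X k)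
    (h0 : 0 ≤ X 0) (h1 : 2*(-b)*X 0 ≤ (a+1)*X 1) :
    ∀ k, 0 ≤ X k ∧ 2*(-b)*X k ≤ (a+1)*X (k+1) := by
  intro k
  induction k with
  | zero => exact ⟨h0, h1⟩
  | succ k ih =>
    obtain ⟨hk0, hk1⟩ := ih
    have hx1 : 0 ≤ X (k+1) := by nlinarith
    refine ⟨hx1, ?_⟩
    have hr := hrec k
    nlinarith [hk1, hx1, hk0]

lemma lucasMono_neg (ha : 3 ≤ a) (hb : b ≤ -1) (hD : 4*(-b) ≤ a^2 - 1)
    (X : ℕ → ℤ) (hrec : ∀ k, X (k+2) = a * X (k+1) + b * X k)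
    (h0 : 0 ≤ X 0) (h1 : 2*(-b)*X 0 ≤ (a+1)*X 1) :
    ∀ k, X (k+1) ≤ X (k+2) := by
  intro k
  obtain ⟨hk0, hk1⟩ := lucasInv_neg a b ha hb hD X hrec h0 h1 k
  obtain ⟨hk0', _⟩ := lucasInv_neg a b ha hb hD X hrec h0 h1 (k+1)
  have hr := hrec k
  nlinarith

lemma a_ge_three (ha : 1 ≤ a) (hb : b ≤ -1) (hD : 0 < a^2 + 4*b) : 3 ≤ a := by
  nlinarith

lemma U_pos_mono (ha : 1 ≤ a) (hb : b ≠ 0) (hD : 0 < a^2 + 4*b) :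
    ∀ k, 1 ≤ U a b (k+1) ∧ U a b (k+1) ≤ U a b (k+2) := by
  have hU1 : U a b 1 = 1 := rfl
  have hU2 : U a b 2 = a := by
    have := U_rec a b 0
    simp [U] at this
    simp [this, U]
  rcases lt_or_gt_of_ne hb with hbneg | hbpos
  · have hb1 : b ≤ -1 := by omega
    have ha3 : 3 ≤ a := a_ge_three a b ha hb1 hD
    have hD' : 4*(-b) ≤ a^2 - 1 := by omega
    have h0 : (0:ℤ) ≤ U a b 0 := by simp [U]
    have h1 : 2*(-b)*U a b 0 ≤ (a+1)*U a b 1 := by simp [U]; omega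
    have hmono := lucasMono_neg a b ha3 hb1 hD' (U a b) (fun k => U_rec a b k) h0 h1
    intro k
    induction k with
    | zero =>
      refine ⟨?_, ?_⟩
      · show (1:ℤ) ≤ U a b 1
        rw [hU1]
      · show U a b 1 ≤ U a b 2
        rw [hU1, hU2]; omega
    | succ k ih =>
      obtain ⟨ih1, ih2⟩ := ih
      exact ⟨le_trans ih1 ih2, hmono (k+1)⟩
  · have hb1 : 1 ≤ b := by omega
    intro k
    induction k with
    | zero =>
      refine ⟨?_, ?_⟩
      · show (1:ℤ) ≤ U a b 1
        rw [hU1]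
      · show U a b 1 ≤ U a b 2
        rw [hU1, hU2]; omega
    | succ k ih =>
      obtain ⟨ih1, ih2⟩ := ih
      have h1 : 1 ≤ U a b (k+2) := le_trans ih1 ih2
      refine ⟨h1, ?_⟩
      have hr := U_rec a b (k+1)
      have h0 : 0 ≤ U a b (k+1) := by omega
      nlinarith

lemma U_le_U (ha : 1 ≤ a) (hb : b ≠ 0) (hD : 0 < a^2 + 4*b) {k n : ℕ}
    (hk : 1 ≤ k) (hkn : k ≤ n) : U a b k ≤ U a b n := by
  have hmono : Monotone (fun j => U a b (j+1)) :=
    monotone_nat_of_le_succ (fun j => (U_pos_mono a b ha hb hD j).2)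
  have := hmono (Nat.sub_le_sub_right hkn 1 : k - 1 ≤ n - 1)
  simpa [Nat.sub_add_cancel hk, Nat.sub_add_cancel (le_trans hk hkn)] using this

lemma U_lt_V (ha : 1 ≤ a) (hb : b ≠ 0) (hD : 0 < a^2 + 4*b) :
    ∀ n, 2 ≤ n → U a b n < V a b n := by
  have hrecD : ∀ k, (V a b (k+2) - U a b (k+2)) = a * (V a b (k+1) - U a b (k+1)) + b * (V a b k - U a b k) := by
    intro k
    rw [U_rec, V_rec]; ring
  have hD0 : V a b 0 - U a b 0 = 2 := by simp [U, V]
  have hD1 : V a b 1 - U a b 1 = a - 1 := by simp [U, V]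
  suffices key : ∀ n, 2 ≤ n → 1 ≤ V a b n - U a b n by
    intro n hn; have := key n hn; omega
  rcases lt_or_gt_of_ne hb with hbneg | hbpos
  · have hb1 : b ≤ -1 := by omega
    have ha3 : 3 ≤ a := a_ge_three a b ha hb1 hD
    have hD' : 4*(-b) ≤ a^2 - 1 := by omega
    have h0 : (0:ℤ) ≤ V a b 0 - U a b 0 := by omega
    have h1 : 2*(-b)*(V a b 0 - U a b 0) ≤ (a+1)*(V a b 1 - U a b 1) := by
      rw [hD0, hD1]; nlinarith
    have hmono : ∀ k, V a b (k+1) - U a b (k+1) ≤ V a b (k+2) - U a b (k+2) := by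
      intro k
      exact lucasMono_neg a b ha3 hb1 hD' (fun k => V a b k - U a b k) hrecD h0 h1 k
    have h1le : ∀ n, 1 ≤ n → 1 ≤ V a b n - U a b n := by
      intro n hn
      induction n with
      | zero => omega
      | succ n ih =>
        rcases Nat.eq_zero_or_pos n with h | h
        · subst h
          show (1:ℤ) ≤ V a b 1 - U a b 1
          omega
        · obtain ⟨n', rfl⟩ : ∃ n', n = n' + 1 := ⟨n - 1, by omega⟩
          exact le_trans (ih (by omega)) (hmono n')
    exact fun n hn => h1le n (by omega)
  · have hb1 : 1 ≤ b := by omega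
    have hnonneg : ∀ k, 0 ≤ V a b k - U a b k := by
      intro k
      induction k using Nat.twoStepInduction with
      | zero => omega
      | one => omega
      | more k ih1 ih2 =>
        have := hrecD k
        nlinarith
    intro n hn
    induction n with
    | zero => omega
    | succ n ih =>
      rcases Nat.lt_or_ge n 2 with h2 | h2
      · interval_cases n
        · omega
        · have h := hrecD 0
          have := hnonneg 0
          rw [hD0, hD1] at h
          nlinarith
      · have h3 := ih h2
        obtain ⟨n', rfl⟩ : ∃ n', n = n' + 1 := ⟨n - 1, by omega⟩
        have := hrecD n'
        have := hnonneg n'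
        have := hnonneg (n'+1)
        nlinarith
end Growth

lemma tau_V_eq (a b : ℤ) (ha : 1 ≤ a) (hab : IsCoprime a b) (hb : b ≠ 0)
    (hD : 0 < a^2 + 4*b) (n : ℕ) (hn : 2 ≤ n) :
    tau a b (V a b n) = 2 * n := by
  obtain ⟨n', rfl⟩ : ∃ n', n = n' + 1 := ⟨n - 1, by omega⟩
  have h2n : V a b (n'+1) ∣ U a b (2*(n'+1)) := by
    rw [U_two_mul]; exact Dvd.intro_left _ rfl
  set S := {k : ℕ | 0 < k ∧ V a b (n'+1) ∣ U a b k} with hS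
  have h2nS : 2*(n'+1) ∈ S := ⟨by omega, h2n⟩
  have hne : S.Nonempty := ⟨_, h2nS⟩
  have htS : tau a b (V a b (n'+1)) ∈ S := Nat.sInf_mem hne
  obtain ⟨htpos, htdvd⟩ := htS
  have htd : tau a b (V a b (n'+1)) ∣ 2*(n'+1) := tau_dvd a b hab _ _ h2n
  set t := tau a b (V a b (n'+1)) with ht
  -- t ∣ 2(n'+1), t > 0. If t ≠ 2(n'+1) then t ≤ n'+1
  rcases eq_or_ne t (2*(n'+1)) with h | h
  · exact h
  exfalso
  have htle : t ≤ n'+1 := by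
    obtain ⟨s, hs⟩ := htd
    rcases Nat.lt_or_ge s 2 with h1 | h1
    · interval_cases s <;> omega
    · nlinarith
  -- V_{n'+1} ∣ U_t with 1 ≤ U_t ≤ U_{n'+1} < V_{n'+1} : contradiction
  have hU1 : 1 ≤ U a b t := by
    obtain ⟨t', ht'⟩ : ∃ t', t = t' + 1 := ⟨t - 1, by omega⟩
    rw [ht']
    exact (U_pos_mono a b ha hb hD t').1
  have hUle : U a b t ≤ U a b (n'+1) := U_le_U a b ha hb hD (by omega) htle
  have hlt : U a b (n'+1) < V a b (n'+1) := U_lt_V a b ha hb hD (n'+1) hn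
  have := Int.le_of_dvd (by omega) htdvd
  omega

lemma U_neg (a b : ℤ) : ∀ k, U (-a) b k = (-1)^(k+1) * U a b k := by
  intro k
  induction k using Nat.twoStepInduction with
  | zero => simp [U]
  | one => simp [U]
  | more k ih1 ih2 =>
    rw [U_rec, U_rec, ih1, ih2]
    ring

lemma V_neg (a b : ℤ) : ∀ k, V (-a) b k = (-1)^k * V a b k := by
  intro k
  induction k using Nat.twoStepInduction with
  | zero => simp [V]
  | one => simp [V]
  | more k ih1 ih2 =>
    rw [V_rec, V_rec, ih1, ih2]
    ring

lemma dvd_U_iff_neg (a b : ℤ) (m : ℤ) (k : ℕ) : m ∣ U (-a) b k ↔ m ∣ U a b k := by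
  rw [U_neg]
  rcases neg_one_pow_eq_or ℤ (k+1) with h | h <;> rw [h] <;> simp

lemma V_neg_dvd (a b : ℤ) (n : ℕ) (x : ℤ) : V (-a) b n ∣ x ↔ V a b n ∣ x := by
  rw [V_neg]
  rcases neg_one_pow_eq_or ℤ n with h | h <;> rw [h] <;> simp

lemma key_dvd (a b : ℤ) (ha0 : a ≠ 0) (hab : IsCoprime a b) (hb : b ≠ 0)
    (hD : 0 < a^2 + 4*b) (n : ℕ) (hn : 2 ≤ n) (k : ℕ)
    (h : V a b n ∣ U a b k) : 2*n ∣ k := by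
  rcases le_or_gt 1 a with ha | ha
  · have h2 := tau_dvd a b hab (V a b n) k h
    rwa [tau_V_eq a b ha hab hb hD n hn] at h2
  · have ha' : 1 ≤ -a := by omega
    have hab' : IsCoprime (-a) b := hab.neg_left
    have hD' : 0 < (-a)^2 + 4*b := by
      have : (-a)^2 = a^2 := by ring
      omega
    have h' : V (-a) b n ∣ U (-a) b k := by
      rw [V_neg_dvd, dvd_U_iff_neg]
      exact h
    have h2 := tau_dvd (-a) b hab' (V (-a) b n) k h'
    rwa [tau_V_eq (-a) b ha' hab' hb hD' n hn] at h2

theorem two_mul_dvd_tau_of_V_dvd (a b : ℤ) (hab : IsCoprime a b)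
    (hΔ : 0 < a ^ 2 + 4 * b) (hnd : Nondegenerate a b)
    (n : ℕ) (hn : 3 ≤ n) (m : ℕ) (hm : 0 < m) (hmb : IsCoprime (m : ℤ) b)
    (hdvd : V a b n ∣ (m : ℤ)) :
    2 * n ∣ tau a b (m : ℤ) := by
  have ha0 : a ≠ 0 := by
    rintro rfl
    have hu : IsUnit b := isCoprime_zero_left.mp hab
    rcases Int.isUnit_iff.mp hu with h | h <;>
      exact hnd.2 (by simp [h])
  have hb : b ≠ 0 := hnd.1
  rcases eq_or_ne (tau a b (m : ℤ)) 0 with h0 | h0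
  · simp [h0]
  · have hne : {k : ℕ | 0 < k ∧ (m : ℤ) ∣ U a b k}.Nonempty := by
      by_contra hc
      rw [Set.not_nonempty_iff_eq_empty] at hc
      apply h0
      rw [tau, hc, Nat.sInf_empty]
    have htS := Nat.sInf_mem hne
    obtain ⟨htpos, htdvd⟩ := htS
    exact key_dvd a b ha0 hab hb (by omega) n (by omega) _ (hdvd.trans htdvd)
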